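/- Let N ≥ 2 and ρ a complex number, and x_1,…,x_N complex numbers such that sinh(π(x_m−x_n)/a) ≠ 0 for all m ≠ n, where a > 0. For each k ∈ {1,…,N}, Σ_{|I|=k} ∏_{m∈I, n∉I} sinh(π(x_m − x_n + ρ)/a)/sinh(π(x_m − x_n)/a) = S_k(e^{π(N−1)ρ/a}, e^{π(N−3)ρ/a}, …, e^{−π(N−1)ρ/a}), where S_k is the k-th elementary symmetric polynomial. -/

import Mathlib

/-!
Put `w_j = exp (2π x_j / a)` and `q = exp (π ρ / a)`. Each ratio of sinh's is then
`(q w_m - q⁻¹ w_n) / (w_m - w_n)`, and the theorem is the case `p = q⁻¹` of Macdonald's identity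
`(p q) ^ (k choose 2) · Σ_{|I| = k} ∏_{m ∈ I, n ∉ I} (q w_m - p w_n) / (w_m - w_n)
  = e_k (q ^ (N - 1), q ^ (N - 2) p, …, p ^ (N - 1))`
for distinct `w`. Both sides obey the same `q`-Pascal recursion when a variable `w_a` is added.
For the left side, expand the factors that involve `w_a` in partial fractions in `w_a`: the polar
part at `w_a = w_j` coming from `I' ∪ {a}` cancels the one coming from `I' ∪ {j}`, so only the
constant terms `q ^ (N - k)` and `p ^ (k + 1)` survive.
-/

open Finset

/-- The `j`-th elementary symmetric function of the elements of a multiset. -/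
noncomputable def esymm (s : Multiset ℂ) (j : ℕ) : ℂ :=
  ((s.powersetCard j).map Multiset.prod).sum

namespace Multiset

theorem range_succ_eq_cons_map (n : ℕ) : range (n + 1) = 0 ::ₘ (range n).map (· + 1) := by
  rw [add_comm, range_add]
  simp [add_comm]

variable {R : Type*} [CommSemiring R]

theorem esymm_zero (s : Multiset R) : s.esymm 0 = 1 := by
  simp [Multiset.esymm]

theorem esymm_cons_succ (c : R) (s : Multiset R) (k : ℕ) :
    (c ::ₘ s).esymm (k + 1) = s.esymm (k + 1) + c * s.esymm k := by
  simp only [Multiset.esymm, Multiset.powersetCard_cons, Multiset.map_add, Multiset.sum_add,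
    Multiset.map_map, Function.comp_def, Multiset.prod_cons, Multiset.sum_map_mul_left]

end Multiset

section HomogeneousPowers

variable {R : Type*} [CommSemiring R]

def homogeneousPowers (p q : R) (n : ℕ) : Multiset R :=
  (Multiset.range n).map fun i => q ^ (n - 1 - i) * p ^ i

theorem esymm_homogeneousPowers_succ (p q : R) (n k : ℕ) :
    (homogeneousPowers p q (n + 1)).esymm (k + 1) =
      q ^ n * p ^ k * (homogeneousPowers p q n).esymm k +
        p ^ (k + 1) * (homogeneousPowers p q n).esymm (k + 1) := by
  have shift : (Multiset.range n).map (fun i => q ^ (n - (i + 1)) * p ^ (i + 1)) =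
      (homogeneousPowers p q n).map (p • ·) := by
    rw [homogeneousPowers, Multiset.map_map]
    refine Multiset.map_congr rfl fun i _ => ?_
    simp only [Function.comp_apply, smul_eq_mul, pow_succ, Nat.sub_add_eq,
      Nat.sub_right_comm n i 1]
    ring
  rw [homogeneousPowers, Nat.add_sub_cancel, Multiset.range_succ_eq_cons_map, Multiset.map_cons,
    Multiset.map_map, Function.comp_def, shift, Multiset.esymm_cons_succ,
    ← Multiset.pow_smul_esymm, ← Multiset.pow_smul_esymm]
  simp only [smul_eq_mul, Nat.sub_zero, pow_zero, mul_one]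
  ring

end HomogeneousPowers

section PowersetCard

variable {ι M : Type*} [DecidableEq ι] [AddCommMonoid M]

theorem sum_powersetCard_succ_insert {a : ι} {A : Finset ι}
    (ha : a ∉ A) (k : ℕ) (f : Finset ι → M) :
    ∑ I ∈ (insert a A).powersetCard (k + 1), f I =
      ∑ I ∈ A.powersetCard k, f (insert a I) + ∑ J ∈ A.powersetCard (k + 1), f J := by
  have hdisj : Disjoint (A.powersetCard (k + 1)) ((A.powersetCard k).image (insert a)) := by
    refine disjoint_left.2 fun J hJ hJ' => ?_
    obtain ⟨I, -, rfl⟩ := mem_image.1 hJ'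
    exact ha ((mem_powersetCard.1 hJ).1 (mem_insert_self a I))
  have hinj : Set.InjOn (insert a) (A.powersetCard k : Set (Finset ι)) := fun I hI J hJ h => by
    have notMem : ∀ {I}, I ∈ A.powersetCard k → a ∉ I := fun hI h =>
      ha ((mem_powersetCard.1 hI).1 h)
    rw [← erase_insert (notMem hI), h, erase_insert (notMem hJ)]
  rw [powersetCard_succ_insert ha, sum_union hdisj, sum_image hinj, add_comm]

theorem sum_powersetCard_sum_sdiff (A : Finset ι) (k : ℕ)
    (g : Finset ι → ι → M) :
    ∑ I ∈ A.powersetCard k, ∑ j ∈ A \ I, g I j =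
      ∑ J ∈ A.powersetCard (k + 1), ∑ j ∈ J, g (J.erase j) j := by
  rw [sum_sigma', sum_sigma']
  refine sum_nbij' (fun x => ⟨insert x.2 x.1, x.2⟩) (fun x => ⟨x.1.erase x.2, x.2⟩)
    ?_ ?_ ?_ ?_ ?_
  · rintro ⟨I, j⟩ h
    simp only [mem_sigma, mem_powersetCard, mem_sdiff] at h ⊢
    exact ⟨⟨insert_subset h.2.1 h.1.1, by rw [card_insert_of_notMem h.2.2, h.1.2]⟩,
      mem_insert_self j I⟩
  · rintro ⟨J, j⟩ h
    simp only [mem_sigma, mem_powersetCard, mem_sdiff] at h ⊢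
    refine ⟨⟨(erase_subset j J).trans h.1.1, ?_⟩, h.1.1 h.2, notMem_erase j J⟩
    rw [card_erase_of_mem h.2, h.1.2, Nat.add_sub_cancel]
  · rintro ⟨I, j⟩ h
    simp only [mem_sigma, mem_sdiff] at h
    simp [erase_insert h.2.2]
  · rintro ⟨J, j⟩ h
    simp only [mem_sigma] at h
    simp [insert_erase h.2]
  · rintro ⟨I, j⟩ h
    simp only [mem_sigma, mem_sdiff] at h
    simp [erase_insert h.2.2]

end PowersetCard

section Macdonald

variable {K ι : Type*} [Field K]

def macdonaldKernel (p q : K) (w : ι → K) (m n : ι) : K :=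
  (q * w m - p * w n) / (w m - w n)

theorem macdonaldKernel_swap (p q : K) (w : ι → K) (m n : ι) :
    macdonaldKernel p q w m n = macdonaldKernel q p w n m := by
  rw [macdonaldKernel, macdonaldKernel, ← neg_div_neg_eq, neg_sub, neg_sub]

variable [DecidableEq ι]

theorem prod_div_sub_eq_prod_add_sum_div_sub (α β w : ι → K) {S : Finset ι}
    (hw : Set.InjOn w S) {z : K} (hz : ∀ n ∈ S, z ≠ w n) :
    ∏ n ∈ S, (α n * z - β n) / (z - w n) =
      ∏ n ∈ S, α n + ∑ j ∈ S,
        (∏ n ∈ S.erase j, (α n * w j - β n) / (w j - w n)) * (α j * w j - β j) / (z - w j) := by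
  induction S using Finset.induction_on generalizing z with
  | empty => simp
  | @insert b S hb ih =>
    set R : ι → K := fun j =>
      (∏ n ∈ S.erase j, (α n * w j - β n) / (w j - w n)) * (α j * w j - β j)
    have hwS : Set.InjOn w S := hw.mono (subset_insert b S)
    have hbS : ∀ j ∈ S, w b ≠ w j := fun j hj =>
      hw.ne (mem_insert_self b S) (mem_insert_of_mem hj) (ne_of_mem_of_not_mem hj hb).symm
    have hzb : z - w b ≠ 0 := sub_ne_zero.2 (hz b (mem_insert_self b S))
    have residue : ∀ j ∈ S, (∏ n ∈ (insert b S).erase j, (α n * w j - β n) / (w j - w n)) *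
        (α j * w j - β j) / (z - w j) = (α b * w j - β b) / (w j - w b) * R j / (z - w j) := by
      intro j hj
      rw [erase_insert_of_ne (ne_of_mem_of_not_mem hj hb).symm,
        prod_insert fun h => hb (mem_of_mem_erase h)]
      ring
    have split : ∀ j ∈ S, (α b * z - β b) / (z - w b) * (R j / (z - w j)) =
        (α b * w b - β b) / (z - w b) * (R j / (w b - w j)) +
          (α b * w j - β b) / (w j - w b) * R j / (z - w j) := by
      intro j hj
      have h1 : z - w j ≠ 0 := sub_ne_zero.2 (hz j (mem_insert_of_mem hj))
      have h2 : w b - w j ≠ 0 := sub_ne_zero.2 (hbS j hj)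
      have h3 : w j - w b ≠ 0 := sub_ne_zero.2 (hbS j hj).symm
      field_simp
      ring
    rw [prod_insert hb, ih hwS fun n hn => hz n (mem_insert_of_mem hn), sum_insert hb,
      erase_insert hb, ih hwS hbS, prod_insert hb, sum_congr rfl residue, mul_add, mul_sum,
      sum_congr rfl split, sum_add_distrib, ← mul_sum]
    simp only [R]
    field_simp
    ring

def macdonaldTerm (p q : K) (w : ι → K) (A I : Finset ι) : K :=
  ∏ m ∈ I, ∏ n ∈ A \ I, macdonaldKernel p q w m n

def macdonaldSum (p q : K) (w : ι → K) (A : Finset ι) (k : ℕ) : K :=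
  ∑ I ∈ A.powersetCard k, macdonaldTerm p q w A I

variable (p q : K) (w : ι → K)

theorem prod_macdonaldKernel_left {a : ι} {B : Finset ι} (ha : a ∉ B)
    (hw : Set.InjOn w (insert a B : Finset ι)) :
    ∏ n ∈ B, macdonaldKernel p q w a n = q ^ B.card + ∑ j ∈ B,
      (∏ n ∈ B.erase j, macdonaldKernel p q w j n) * (q * w j - p * w j) / (w a - w j) := by
  have haB : ∀ n ∈ B, w a ≠ w n := fun n hn =>
    hw.ne (mem_insert_self a B) (mem_insert_of_mem hn) (ne_of_mem_of_not_mem hn ha).symm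
  simpa [macdonaldKernel] using prod_div_sub_eq_prod_add_sum_div_sub (fun _ => q) (fun n => p * w n)
    w (hw.mono (subset_insert a B)) haB

theorem prod_macdonaldKernel_right {a : ι} {B : Finset ι} (ha : a ∉ B)
    (hw : Set.InjOn w (insert a B : Finset ι)) :
    ∏ m ∈ B, macdonaldKernel p q w m a = p ^ B.card + ∑ j ∈ B,
      (∏ m ∈ B.erase j, macdonaldKernel p q w m j) * (p * w j - q * w j) / (w a - w j) := by
  simp only [macdonaldKernel_swap p q w]
  exact prod_macdonaldKernel_left q p w ha hw

theorem macdonaldTerm_insert_insert {a : ι} {A I : Finset ι} (ha : a ∉ A) (hI : I ⊆ A) :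
    macdonaldTerm p q w (insert a A) (insert a I) =
      (∏ n ∈ A \ I, macdonaldKernel p q w a n) * macdonaldTerm p q w A I := by
  rw [macdonaldTerm, insert_sdiff_insert, sdiff_insert_of_notMem ha,
    prod_insert fun h => ha (hI h)]
  rfl

theorem macdonaldTerm_insert_of_subset {a : ι} {A I : Finset ι} (ha : a ∉ A) (hI : I ⊆ A) :
    macdonaldTerm p q w (insert a A) I =
      (∏ m ∈ I, macdonaldKernel p q w m a) * macdonaldTerm p q w A I := by
  rw [macdonaldTerm, macdonaldTerm, insert_sdiff_of_notMem A fun h => ha (hI h),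
    ← prod_mul_distrib]
  exact prod_congr rfl fun m _ => prod_insert fun h => ha (mem_sdiff.1 h).1

theorem macdonaldTerm_residues_cancel {A J : Finset ι} {j : ι} (hJ : J ⊆ A) (hj : j ∈ J) :
    (∏ n ∈ (A \ J.erase j).erase j, macdonaldKernel p q w j n) * (q * w j - p * w j) *
        macdonaldTerm p q w A (J.erase j) +
      (∏ m ∈ J.erase j, macdonaldKernel p q w m j) * (p * w j - q * w j) *
        macdonaldTerm p q w A J = 0 := by
  have hjA : j ∉ A \ J := fun h => (mem_sdiff.1 h).2 hj
  have outer : macdonaldTerm p q w A J = (∏ n ∈ A \ J, macdonaldKernel p q w j n) *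
      ∏ m ∈ J.erase j, ∏ n ∈ A \ J, macdonaldKernel p q w m n := by
    rw [macdonaldTerm, ← mul_prod_erase J _ hj]
  have inner : macdonaldTerm p q w A (J.erase j) = (∏ m ∈ J.erase j, macdonaldKernel p q w m j) *
      ∏ m ∈ J.erase j, ∏ n ∈ A \ J, macdonaldKernel p q w m n := by
    rw [macdonaldTerm, sdiff_erase (hJ hj), ← prod_mul_distrib]
    exact prod_congr rfl fun m _ => prod_insert hjA
  rw [sdiff_erase (hJ hj), erase_insert hjA, inner, outer]
  ring

theorem macdonaldSum_insert {a : ι} {A : Finset ι} (ha : a ∉ A)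
    (hw : Set.InjOn w (insert a A : Finset ι)) (k : ℕ) :
    macdonaldSum p q w (insert a A) (k + 1) =
      q ^ (A.card - k) * macdonaldSum p q w A k + p ^ (k + 1) * macdonaldSum p q w A (k + 1) := by
  have hwB : ∀ B ⊆ A, Set.InjOn w (insert a B : Finset ι) := fun B hB =>
    hw.mono (coe_subset.2 (insert_subset_insert a hB))
  set residue : Finset ι → ι → K := fun I j =>
    (∏ n ∈ (A \ I).erase j, macdonaldKernel p q w j n) * (q * w j - p * w j) *
      macdonaldTerm p q w A I / (w a - w j)
  set residue' : Finset ι → ι → K := fun J j =>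
    (∏ m ∈ J.erase j, macdonaldKernel p q w m j) * (p * w j - q * w j) *
      macdonaldTerm p q w A J / (w a - w j)
  have with_a : ∀ I ∈ A.powersetCard k, macdonaldTerm p q w (insert a A) (insert a I) =
      q ^ (A.card - k) * macdonaldTerm p q w A I + ∑ j ∈ A \ I, residue I j := by
    intro I hI
    obtain ⟨hIA, rfl⟩ := mem_powersetCard.1 hI
    rw [macdonaldTerm_insert_insert p q w ha hIA,
      prod_macdonaldKernel_left p q w (fun h => ha (mem_sdiff.1 h).1) (hwB _ sdiff_subset),
      card_sdiff_of_subset hIA, add_mul, sum_mul]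
    simp only [residue, div_mul_eq_mul_div]
  have without_a : ∀ J ∈ A.powersetCard (k + 1), macdonaldTerm p q w (insert a A) J =
      p ^ (k + 1) * macdonaldTerm p q w A J + ∑ j ∈ J, residue' J j := by
    intro J hJ
    obtain ⟨hJA, hJk⟩ := mem_powersetCard.1 hJ
    rw [macdonaldTerm_insert_of_subset p q w ha hJA,
      prod_macdonaldKernel_right p q w (fun h => ha (hJA h)) (hwB J hJA), hJk, add_mul, sum_mul]
    simp only [residue', div_mul_eq_mul_div]
  have cancel :
      ∀ J ∈ A.powersetCard (k + 1), ∑ j ∈ J, (residue (J.erase j) j + residue' J j) = 0 :=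
    fun J hJ => sum_eq_zero fun j hj => by
      rw [← add_div, macdonaldTerm_residues_cancel p q w (mem_powersetCard.1 hJ).1 hj, zero_div]
  rw [macdonaldSum, sum_powersetCard_succ_insert ha, sum_congr rfl with_a, sum_congr rfl without_a,
    sum_add_distrib, sum_add_distrib, sum_powersetCard_sum_sdiff, add_add_add_comm,
    ← sum_add_distrib, sum_congr rfl fun J _ => (sum_add_distrib).symm, sum_eq_zero cancel,
    add_zero, ← mul_sum, ← mul_sum]
  rfl

theorem pow_choose_two_mul_macdonaldSum {A : Finset ι} (hw : Set.InjOn w A) (k : ℕ) :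
    (p * q) ^ k.choose 2 * macdonaldSum p q w A k = (homogeneousPowers p q A.card).esymm k := by
  induction A using Finset.induction_on generalizing k with
  | empty =>
    cases k <;> simp [macdonaldSum, macdonaldTerm, homogeneousPowers, Multiset.esymm,
      Multiset.powersetCard_zero_right]
  | @insert a A ha ih =>
    have ihA := ih (hw.mono (coe_subset.2 (subset_insert a A)))
    cases k with
    | zero => simp [macdonaldSum, macdonaldTerm, Multiset.esymm_zero]
    | succ k =>
      have leading : q ^ (A.card - k) * (p * q) ^ k * macdonaldSum p q w A k =
          q ^ A.card * p ^ k * macdonaldSum p q w A k := by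
        rcases le_or_gt k A.card with hk | hk
        · conv_rhs => rw [← Nat.sub_add_cancel hk, pow_add]
          ring
        · simp [macdonaldSum, powersetCard_eq_empty.2 hk]
      rw [card_insert_of_notMem ha, esymm_homogeneousPowers_succ, ← ihA, ← ihA,
        macdonaldSum_insert p q w ha hw, Nat.choose_succ_succ', Nat.choose_one_right, pow_add]
      linear_combination (p * q) ^ k.choose 2 * leading

end Macdonald

namespace Complex

theorem two_mul_exp_add_mul_sinh_sub (u v : ℂ) :
    2 * exp (u + v) * sinh (u - v) = exp (2 * u) - exp (2 * v) := by
  rw [sinh, mul_right_comm, mul_div_cancel₀ _ two_ne_zero, sub_mul, ← exp_add, ← exp_add]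
  ring_nf

theorem sinh_sub_eq_zero_iff (u v : ℂ) : sinh (u - v) = 0 ↔ exp (2 * u) = exp (2 * v) := by
  rw [← sub_eq_zero (a := exp (2 * u)), ← two_mul_exp_add_mul_sinh_sub,
    mul_eq_zero_iff_left (mul_ne_zero two_ne_zero (exp_ne_zero (u + v)))]

theorem sinh_sub_add_div_sinh_sub (u v r : ℂ) :
    sinh (u - v + r) / sinh (u - v) =
      macdonaldKernel (exp (-r)) (exp r) (fun z => exp (2 * z)) u v := by
  have shifted := two_mul_exp_add_mul_sinh_sub (u + r / 2) (v - r / 2)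
  rw [macdonaldKernel, ← exp_add, ← exp_add, ← two_mul_exp_add_mul_sinh_sub,
    ← mul_div_mul_left _ _ (mul_ne_zero two_ne_zero (exp_ne_zero (u + v)))]
  convert congrArg (· / _) shifted using 4 <;> ring_nf

theorem homogeneousPowers_exp_neg_exp (r : ℂ) (N : ℕ) :
    homogeneousPowers (exp (-r)) (exp r) N =
      (Multiset.range N).map fun i : ℕ => exp (((N : ℂ) - 1 - 2 * i) * r) := by
  refine Multiset.map_congr rfl fun i hi => ?_
  rw [Multiset.mem_range] at hi
  rw [← exp_nat_mul, ← exp_nat_mul, ← exp_add, Nat.cast_sub (by omega), Nat.cast_sub (by omega)]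
  congr 1
  push_cast
  ring

end Complex

theorem sinh_sum_esymm_general (N : ℕ) (a : ℝ) (ρ : ℂ)
    (x : Fin N → ℂ)
    (hx : ∀ m n : Fin N, m ≠ n → Complex.sinh ((Real.pi : ℂ) * (x m - x n) / a) ≠ 0)
    (k : ℕ) :
    ∑ I ∈ Finset.powersetCard k (Finset.univ : Finset (Fin N)),
      ∏ m ∈ I, ∏ n ∈ Iᶜ,
        Complex.sinh ((Real.pi : ℂ) * (x m - x n + ρ) / a) /
          Complex.sinh ((Real.pi : ℂ) * (x m - x n) / a)
    = esymm ((Multiset.range N).map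
        (fun i => Complex.exp ((Real.pi : ℂ) * ((N : ℂ) - 1 - 2 * (i : ℂ)) * ρ / a))) k := by
  open Complex in
  set r : ℂ := Real.pi * ρ / a
  set y : Fin N → ℂ := fun j => Real.pi * x j / a
  have arg : ∀ m n, (Real.pi : ℂ) * (x m - x n) / a = y m - y n := fun m n => by ring
  have ratio : ∀ m n, sinh (Real.pi * (x m - x n + ρ) / a) / sinh (Real.pi * (x m - x n) / a) =
      macdonaldKernel (exp (-r)) (exp r) (fun j => exp (2 * y j)) m n := fun m n => by
    rw [show (Real.pi : ℂ) * (x m - x n + ρ) / a = y m - y n + r by ring, arg,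
      sinh_sub_add_div_sinh_sub]
    rfl
  have hw : Set.InjOn (fun j => exp (2 * y j)) (univ : Finset (Fin N)) := fun m _ n _ hmn =>
    by_contra fun hne => hx m n hne (by rw [arg, sinh_sub_eq_zero_iff]; exact hmn)
  -- `(i : ℂ)` in the statement makes Lean cast the multiset `range N` itself, as a monad
  have powers : ((Multiset.range N).map fun i =>
      exp ((Real.pi : ℂ) * ((N : ℂ) - 1 - 2 * (i : ℂ)) * ρ / a)) =
        homogeneousPowers (exp (-r)) (exp r) N := by
    rw [bind_pure_comp, Multiset.fmap_def, Multiset.map_map, homogeneousPowers_exp_neg_exp]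
    exact Multiset.map_congr rfl fun i _ => congrArg exp (by ring)
  calc _ = macdonaldSum (exp (-r)) (exp r) (fun j => exp (2 * y j)) univ k := by
        simp only [macdonaldSum, macdonaldTerm, compl_eq_univ_sdiff, ratio]
    _ = (exp (-r) * exp r) ^ k.choose 2 *
          macdonaldSum (exp (-r)) (exp r) (fun j => exp (2 * y j)) univ k := by
        rw [← exp_add, neg_add_cancel, exp_zero, one_pow, one_mul]
    _ = _ := by
        rw [pow_choose_two_mul_macdonaldSum _ _ _ hw, card_univ, Fintype.card_fin, powers]
        rfl

/-- Corollary 2.4 (hyperbolic version): the functional identities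
`Σ_{|I|=k} ∏_{m∈I,n∉I} sinh(π(x_m-x_n+ρ)/a)/sinh(π(x_m-x_n)/a)
  = S_k(e^{π(N-1)ρ/a}, …, e^{-π(N-1)ρ/a})`. -/
theorem sinh_sum_esymm (N : ℕ) (hN : 2 ≤ N) (a : ℝ) (ha : 0 < a) (ρ : ℂ)
    (x : Fin N → ℂ)
    (hx : ∀ m n : Fin N, m ≠ n → Complex.sinh ((Real.pi : ℂ) * (x m - x n) / a) ≠ 0)
    (k : ℕ) (hk1 : 1 ≤ k) (hk : k ≤ N) :
    ∑ I ∈ Finset.powersetCard k (Finset.univ : Finset (Fin N)),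
      ∏ m ∈ I, ∏ n ∈ Iᶜ,
        Complex.sinh ((Real.pi : ℂ) * (x m - x n + ρ) / a) /
          Complex.sinh ((Real.pi : ℂ) * (x m - x n) / a)
    = esymm ((Multiset.range N).map
        (fun i => Complex.exp ((Real.pi : ℂ) * ((N : ℂ) - 1 - 2 * (i : ℂ)) * ρ / a))) k :=
  sinh_sum_esymm_general N a ρ x hx k
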